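/- Each of the three fields Ψ_{ABCD}(x) = p_A p_B p_C p_D e^{i k·x}, Ψ'_{ABCD}(x) = (det x) · p_A p_B p_C p_D e^{i k·x}, and Ψ''_{ABCD}(x) = α_{(A} p_B p_C p_{D)} e^{i k·x} (round brackets denoting total symmetrization over A,B,C,D) satisfies the flat-space linearized Bach equation ∑_{C,D,E,F} ε^{CE} ε^{DF} ∂_{E A'} ∂_{F B'} Ψ_{ABCD}(x) = 0 for all A, B, A', B' and all x. Consequently any linear combination, in particular the Einstein polarization state (1 − Λ·det x) p_A p_B p_C p_D e^{i k·x}, is a solution of the linearized Bach equations. -/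

import Mathlib

/-- Complexified Minkowski space in spinor coordinates: points are
`x = (x^{AA'})` with `A, A' ∈ Fin 2`. -/
abbrev SpinorSpacetime : Type := Fin 2 → Fin 2 → ℂ

/-- The partial derivative `∂_{AA'} f` of a function `f` on complexified
Minkowski space, in the coordinate direction `x^{AA'}`. -/
noncomputable def spinorPDeriv (A A' : Fin 2) (f : SpinorSpacetime → ℂ) :
    SpinorSpacetime → ℂ :=
  fun x => fderiv ℂ f x (Pi.single A (Pi.single A' 1))

/-- The Levi–Civita symbol on `Fin 2`: `ε^{01} = 1 = −ε^{10}`, `ε^{00} = ε^{11} = 0`. -/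
def levicivita2 : Fin 2 → Fin 2 → ℂ := fun a b =>
  if a = 0 ∧ b = 1 then 1 else if a = 1 ∧ b = 0 then -1 else 0

/-- The flat-space linearized Bach equation for a field `Ψ_{ABCD}(x)`:
`∑_{C,D,E,F} ε^{CE} ε^{DF} ∂_{EA'} ∂_{FB'} Ψ_{ABCD}(x) = 0` for all
`A, B, A', B'` and all `x`. -/
def SatisfiesLinearizedBach
    (Ψ : SpinorSpacetime → Fin 2 → Fin 2 → Fin 2 → Fin 2 → ℂ) : Prop :=
  ∀ (A B A' B' : Fin 2) (x : SpinorSpacetime),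
    ∑ C : Fin 2, ∑ D : Fin 2, ∑ E : Fin 2, ∑ F : Fin 2,
      levicivita2 C E * levicivita2 D F *
        spinorPDeriv E A' (spinorPDeriv F B' (fun y => Ψ y A B C D)) x = 0

/-- The plane-wave factor `e^{i k·x}` for the null momentum `k_{AA'} = p_A p̃_{A'}`. -/
noncomputable def planeWave (p pt : Fin 2 → ℂ) (x : SpinorSpacetime) : ℂ :=
  Complex.exp (Complex.I * ∑ a : Fin 2, ∑ b : Fin 2, p a * pt b * x a b)


/-! Conjugation by the plane wave turns `∂_{EA'}` into `∂_{EA'} + i p_E p̃_{A'}`, so the Bach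
operator applied to `P(x) e^{ik·x}` is `e^{ik·x}` times a polynomial in `x` contracted against
`ε^{CE} ε^{DF}`. For the three states every term of that polynomial contracts `ε^{CE} p_E` or
`ε^{DF} p_F` with a factor `p_C` or `p_D` of the field and vanishes because `ε^{CE} p_C p_E = 0`;
the one exception, the constant second derivative `∂_{EA'} ∂_{FB'} det x = ε_{FE} ε_{B'A'}`,
contributes `ε^{CE} ε^{DF} ε_{FE} p_C p_D = -ε^{CD} p_C p_D = 0`. -/

open Complex

section SpinorCalculus

variable {f g : SpinorSpacetime → ℂ} {x : SpinorSpacetime} (E A' : Fin 2)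

theorem spinorPDeriv_const (c : ℂ) : spinorPDeriv E A' (fun _ => c) = fun _ => 0 := by
  funext x
  simp [spinorPDeriv]

theorem spinorPDeriv_add (hf : DifferentiableAt ℂ f x) (hg : DifferentiableAt ℂ g x) :
    spinorPDeriv E A' (fun y => f y + g y) x = spinorPDeriv E A' f x + spinorPDeriv E A' g x := by
  simp [spinorPDeriv, fderiv_fun_add hf hg]

theorem spinorPDeriv_sub (hf : DifferentiableAt ℂ f x) (hg : DifferentiableAt ℂ g x) :
    spinorPDeriv E A' (fun y => f y - g y) x = spinorPDeriv E A' f x - spinorPDeriv E A' g x := by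
  simp [spinorPDeriv, fderiv_fun_sub hf hg]

theorem spinorPDeriv_sum {ι : Type*} (s : Finset ι) {f : ι → SpinorSpacetime → ℂ}
    (hf : ∀ i ∈ s, DifferentiableAt ℂ (f i) x) :
    spinorPDeriv E A' (fun y => ∑ i ∈ s, f i y) x = ∑ i ∈ s, spinorPDeriv E A' (f i) x := by
  simp [spinorPDeriv, fderiv_fun_sum hf]

theorem spinorPDeriv_mul (hf : DifferentiableAt ℂ f x) (hg : DifferentiableAt ℂ g x) :
    spinorPDeriv E A' (fun y => f y * g y) x =
      spinorPDeriv E A' f x * g x + f x * spinorPDeriv E A' g x := by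
  simp [spinorPDeriv, fderiv_fun_mul hf hg]
  ring

theorem spinorPDeriv_const_mul (c : ℂ) (hf : DifferentiableAt ℂ f x) :
    spinorPDeriv E A' (fun y => c * f y) x = c * spinorPDeriv E A' f x := by
  simp [spinorPDeriv_mul E A' (differentiableAt_const c) hf, spinorPDeriv_const]

theorem spinorPDeriv_cexp (hf : DifferentiableAt ℂ f x) :
    spinorPDeriv E A' (fun y => cexp (f y)) x = cexp (f x) * spinorPDeriv E A' f x := by
  simp [spinorPDeriv, hf.hasFDerivAt.cexp.fderiv]

theorem spinorPDeriv_coord (a b : Fin 2) :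
    spinorPDeriv E A' (fun y => y a b) x =
      (Pi.single E (Pi.single A' 1) : SpinorSpacetime) a b := by
  have h : HasFDerivAt (fun y : SpinorSpacetime => y a b)
      ((ContinuousLinearMap.proj b : (Fin 2 → ℂ) →L[ℂ] ℂ).comp (ContinuousLinearMap.proj a)) x :=
    ((ContinuousLinearMap.proj b).comp
      (ContinuousLinearMap.proj a : SpinorSpacetime →L[ℂ] Fin 2 → ℂ)).hasFDerivAt
  simp [spinorPDeriv, h.fderiv]

theorem spinorPDeriv_linear (c : Fin 2 → Fin 2 → ℂ) :
    spinorPDeriv E A' (fun y => ∑ a, ∑ b, c a b * y a b) x = c E A' := by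
  simp (disch := fun_prop) only [spinorPDeriv_sum, spinorPDeriv_const_mul, spinorPDeriv_coord]
  fin_cases E <;> fin_cases A' <;> simp

theorem ContDiff.spinorPDeriv {n : WithTop ℕ∞} (hf : ContDiff ℂ (n + 1) f) :
    ContDiff ℂ n (spinorPDeriv E A' f) :=
  (hf.fderiv_right le_rfl).clm_apply contDiff_const

end SpinorCalculus

section PlaneWave

variable (p pt : Fin 2 → ℂ) (E A' F B' : Fin 2) (x : SpinorSpacetime) {P : SpinorSpacetime → ℂ}

theorem contDiff_planeWave : ContDiff ℂ ⊤ (planeWave p pt) := by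
  unfold planeWave
  fun_prop

theorem spinorPDeriv_planeWave :
    spinorPDeriv E A' (planeWave p pt) x = I * (p E * pt A') * planeWave p pt x := by
  unfold planeWave
  simp (disch := fun_prop) only [spinorPDeriv_cexp, spinorPDeriv_const_mul, spinorPDeriv_linear]
  ring

theorem spinorPDeriv_mul_planeWave (hP : DifferentiableAt ℂ P x) :
    spinorPDeriv E A' (fun y => P y * planeWave p pt y) x =
      (spinorPDeriv E A' P x + I * (p E * pt A') * P x) * planeWave p pt x := by
  rw [spinorPDeriv_mul E A' hP ((contDiff_planeWave p pt).differentiable (by simp) x),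
    spinorPDeriv_planeWave]
  ring

theorem spinorPDeriv_spinorPDeriv_mul_planeWave (hP : ContDiff ℂ 2 P) :
    spinorPDeriv E A' (spinorPDeriv F B' (fun y => P y * planeWave p pt y)) x =
      (spinorPDeriv E A' (spinorPDeriv F B' P) x + I * (p E * pt A') * spinorPDeriv F B' P x
        + I * (p F * pt B') * spinorPDeriv E A' P x
        + I * (p E * pt A') * (I * (p F * pt B')) * P x) * planeWave p pt x := by
  have hP1 : Differentiable ℂ P := hP.differentiable (by norm_num)
  have hDP : Differentiable ℂ (spinorPDeriv F B' P) :=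
    (hP.spinorPDeriv F B' (n := 1)).differentiable one_ne_zero
  have hinner : spinorPDeriv F B' (fun y => P y * planeWave p pt y) =
      fun y => (spinorPDeriv F B' P y + I * (p F * pt B') * P y) * planeWave p pt y :=
    funext fun y => spinorPDeriv_mul_planeWave p pt F B' y (hP1 y)
  rw [hinner, spinorPDeriv_mul_planeWave p pt E A' x
      (P := fun y => spinorPDeriv F B' P y + I * (p F * pt B') * P y)
      ((hDP x).add ((hP1 x).const_mul _)),
    spinorPDeriv_add E A' (hDP x) ((hP1 x).const_mul _), spinorPDeriv_const_mul E A' _ (hP1 x)]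
  ring

end PlaneWave

section Determinant

variable (E A' F B' : Fin 2)

theorem spinorPDeriv_det (x : SpinorSpacetime) :
    spinorPDeriv E A' (fun y => y 0 0 * y 1 1 - y 0 1 * y 1 0) x =
      ∑ G, ∑ C', levicivita2 E G * levicivita2 A' C' * x G C' := by
  simp (disch := fun_prop) only [spinorPDeriv_sub, spinorPDeriv_mul, spinorPDeriv_coord]
  fin_cases E <;> fin_cases A' <;> simp [levicivita2]

theorem spinorPDeriv_spinorPDeriv_det (x : SpinorSpacetime) :
    spinorPDeriv E A' (spinorPDeriv F B' (fun y => y 0 0 * y 1 1 - y 0 1 * y 1 0)) x =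
      levicivita2 F E * levicivita2 B' A' := by
  rw [funext (spinorPDeriv_det F B')]
  exact spinorPDeriv_linear E A' (fun G C' => levicivita2 F G * levicivita2 B' C')

theorem differentiable_spinorPDeriv_det :
    Differentiable ℂ (spinorPDeriv E A' (fun y => y 0 0 * y 1 1 - y 0 1 * y 1 0)) := by
  rw [funext (spinorPDeriv_det E A')]
  fun_prop

end Determinant

theorem sum_perm_fin_succ {M : Type*} [AddCommMonoid M] {n : ℕ}
    (F : Equiv.Perm (Fin (n + 1)) → M) :
    ∑ π, F π = ∑ a, ∑ σ : Equiv.Perm (Fin n), F (Equiv.Perm.decomposeFin.symm (a, σ)) := by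
  rw [← Equiv.sum_comp Equiv.Perm.decomposeFin.symm F, Fintype.sum_prod_type]

theorem sum_perm_fin_four {R ι : Type*} [CommSemiring R] (a b : ι → R) (v : Fin 4 → ι) :
    ∑ π : Equiv.Perm (Fin 4), a (v (π 0)) * b (v (π 1)) * b (v (π 2)) * b (v (π 3)) =
      6 * (a (v 0) * b (v 1) * b (v 2) * b (v 3) + a (v 1) * b (v 0) * b (v 2) * b (v 3) +
        a (v 2) * b (v 0) * b (v 1) * b (v 3) + a (v 3) * b (v 0) * b (v 1) * b (v 2)) := by
  simp only [sum_perm_fin_succ]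
  -- `decomposeFin_symm_apply_succ` only fires on indices written as `Fin.succ _`
  simp only [show (1 : Fin 4) = Fin.succ 0 from rfl, show (2 : Fin 4) = Fin.succ 1 from rfl,
    show (3 : Fin 4) = Fin.succ 2 from rfl, show (1 : Fin 3) = Fin.succ 0 from rfl,
    show (2 : Fin 3) = Fin.succ 1 from rfl, show (1 : Fin 2) = Fin.succ 0 from rfl,
    Equiv.Perm.decomposeFin_symm_apply_zero, Equiv.Perm.decomposeFin_symm_apply_succ]
  simp only [Fin.sum_univ_succ, Finset.univ_unique, Finset.sum_singleton]
  simp [Equiv.swap_apply_def, Fin.ext_iff]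
  ring

section Bach

variable (p pt : Fin 2 → ℂ)

theorem satisfiesLinearizedBach_const_mul_planeWave (Φ : Fin 2 → Fin 2 → Fin 2 → Fin 2 → ℂ)
    (hΦ : ∀ A B, ∑ C, ∑ D, ∑ E, ∑ F,
      levicivita2 C E * levicivita2 D F * (p E * p F * Φ A B C D) = 0) :
    SatisfiesLinearizedBach (fun x A B C D => Φ A B C D * planeWave p pt x) := by
  intro A B A' B' x
  have h := hΦ A B
  simp only [spinorPDeriv_spinorPDeriv_mul_planeWave p pt _ _ _ _ x contDiff_const,
    spinorPDeriv_const]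
  simp only [Fin.sum_univ_two] at h ⊢
  linear_combination (I ^ 2 * pt A' * pt B' * planeWave p pt x) * h

theorem satisfiesLinearizedBach_affineDet_mul_planeWave (a b : ℂ) :
    SatisfiesLinearizedBach (fun x A B C D => (a + b * (x 0 0 * x 1 1 - x 0 1 * x 1 0)) *
      (p A * p B * p C * p D) * planeWave p pt x) := by
  intro A B A' B' x
  have hP : ∀ c : ℂ, ContDiff ℂ 2 fun y : SpinorSpacetime =>
      (a + b * (y 0 0 * y 1 1 - y 0 1 * y 1 0)) * c := fun c => by fun_prop
  have hDP : ∀ (c : ℂ) (E A' : Fin 2) (y : SpinorSpacetime),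
      spinorPDeriv E A' (fun y => (a + b * (y 0 0 * y 1 1 - y 0 1 * y 1 0)) * c) y =
        b * spinorPDeriv E A' (fun y => y 0 0 * y 1 1 - y 0 1 * y 1 0) y * c := by
    intro c E A' y
    simp (disch := fun_prop) only [spinorPDeriv_mul, spinorPDeriv_add, spinorPDeriv_const]
    ring
  have hD2P : ∀ (c : ℂ) (E A' F B' : Fin 2) (y : SpinorSpacetime),
      spinorPDeriv E A' (spinorPDeriv F B'
        (fun y => (a + b * (y 0 0 * y 1 1 - y 0 1 * y 1 0)) * c)) y =
        b * (levicivita2 F E * levicivita2 B' A') * c := by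
    intro c E A' F B' y
    have := differentiable_spinorPDeriv_det F B'
    rw [funext (hDP c F B')]
    simp (disch := fun_prop) only [spinorPDeriv_mul, spinorPDeriv_const,
      spinorPDeriv_spinorPDeriv_det]
    ring
  simp only [spinorPDeriv_spinorPDeriv_mul_planeWave p pt _ _ _ _ x (hP _), hDP, hD2P,
    spinorPDeriv_det]
  fin_cases A' <;> fin_cases B' <;> simp [Fin.sum_univ_two, levicivita2] <;> ring

end Bach

/-- **Polarization states of conformal gravity solve the linearized Bach equation.**
For spinors `p, α, p̃ ∈ ℂ²` and `k_{AA'} = p_A p̃_{A'}`, each of the fields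
`Ψ_{ABCD} = p_A p_B p_C p_D e^{ik·x}`,
`Ψ'_{ABCD} = (det x) p_A p_B p_C p_D e^{ik·x}` (with `x² = det x`), and
`Ψ''_{ABCD} = α_{(A} p_B p_C p_{D)} e^{ik·x}` (total symmetrization over
`A,B,C,D`) satisfies the flat-space linearized Bach equation, and consequently
so does the Einstein polarization state
`(1 − Λ · det x) p_A p_B p_C p_D e^{ik·x}` for any `Λ`. -/
theorem polarization_states_satisfy_bach (p pt αs : Fin 2 → ℂ) (Λ : ℂ) :
    SatisfiesLinearizedBach
        (fun x A B C D => p A * p B * p C * p D * planeWave p pt x) ∧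
      SatisfiesLinearizedBach
        (fun x A B C D => (x 0 0 * x 1 1 - x 0 1 * x 1 0) *
          (p A * p B * p C * p D) * planeWave p pt x) ∧
      SatisfiesLinearizedBach
        (fun x A B C D =>
          ((24 : ℂ)⁻¹ * ∑ π : Equiv.Perm (Fin 4),
            αs (![A, B, C, D] (π 0)) * p (![A, B, C, D] (π 1)) *
              p (![A, B, C, D] (π 2)) * p (![A, B, C, D] (π 3))) *
            planeWave p pt x) ∧
      SatisfiesLinearizedBach
        (fun x A B C D => (1 - Λ * (x 0 0 * x 1 1 - x 0 1 * x 1 0)) *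
          (p A * p B * p C * p D) * planeWave p pt x) := by
  refine ⟨satisfiesLinearizedBach_const_mul_planeWave p pt _ fun A B => ?_, ?_,
    satisfiesLinearizedBach_const_mul_planeWave p pt _ fun A B => ?_, ?_⟩
  · simp [Fin.sum_univ_two, levicivita2]
    ring
  · simpa using satisfiesLinearizedBach_affineDet_mul_planeWave p pt 0 1
  · simp only [sum_perm_fin_four]
    simp [Fin.sum_univ_two, levicivita2]
    ring
  · simpa [sub_eq_add_neg] using satisfiesLinearizedBach_affineDet_mul_planeWave p pt 1 (-Λ)
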